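/- arXiv:2104.11025 — 6 statements merged into one kernel-verified Lean document; each statement's English description precedes it below -/
import Mathlib

section
/- Let T be a {1,3}-tree with edge set E, let X_T be its set of leaf-edges, and let X ⊆ X_T with |X| even. Then there exists a unique point x ∈ P_T such that x_e = 1/2 for e ∈ X and x_e = 0 for e ∈ X_T \ X; moreover all coordinates of x lie in {0, 1/2} and its support is the edge set of a collection of disjoint leaf-paths of T. -/
/-!
Mark the leaves whose edge lies in `X`; there are evenly many of them. Give an edge the weight
`1/2` when an odd number of marked leaves lie on one side of it (equivalently on either side)
and `0` otherwise. The branches at the three other ends of an internal node partition the marked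
leaves, so either none or exactly two of its edges are odd: the point lies in `P_T` and its
support meets every internal node in `0` or `2` edges. Conversely, at an internal node the
inequalities of `P_T` force the weight of an edge once the other two lie in `{0, 1/2}` (it is
their sum modulo `1`), so induction on the size of the branch behind an edge, starting from
the prescribed leaf-edges, shows that every admissible point is this one.
-/

open Finset
open scoped Classical

noncomputable section

/-- The Liu–Osserman polytope `P_T` of a `{1,3}`-graph, as a subset of `ℝ^{Sym2 V}`
supported on the edges of `T`: at each internal (degree-3) node with incident edges
`a, b, c` the triangle inequalities `w_a ≤ w_b + w_c` (in all three versions) and the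
perimeter inequality `w_a + w_b + w_c ≤ 1` hold, and `0 ≤ w_e ≤ 1/2` for any edge both
of whose endpoints are leaves. -/
def memP {V : Type*} [Fintype V] [DecidableEq V] (T : SimpleGraph V) [DecidableRel T.Adj]
    (w : Sym2 V → ℝ) : Prop :=
  (∀ e, e ∉ T.edgeSet → w e = 0) ∧
  (∀ v : V, T.degree v = 3 →
    (∀ a ∈ T.incidenceFinset v, w a ≤ ∑ b ∈ (T.incidenceFinset v).erase a, w b) ∧
    ∑ a ∈ T.incidenceFinset v, w a ≤ 1) ∧
  (∀ e ∈ T.edgeSet, (∀ v ∈ e, T.degree v = 1) → 0 ≤ w e ∧ w e ≤ 1 / 2)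

/-- `H` is (the edge set of) a collection of pairwise disjoint leaf-paths of the
`{1,3}`-tree `T`: a set of edges in which every internal (degree-3) node of `T` has
degree `0` or `2` (an internally Eulerian subgraph of a tree). -/
def isLeafPathCollection {V : Type*} [Fintype V] [DecidableEq V] (T : SimpleGraph V)
    [DecidableRel T.Adj] (H : Finset (Sym2 V)) : Prop :=
  H ⊆ T.edgeFinset ∧
  ∀ v : V, T.degree v = 3 →
    (H.filter (fun e => v ∈ e)).card = 0 ∨ (H.filter (fun e => v ∈ e)).card = 2

/-- The leaf-edges of `T`: edges incident to a degree-1 vertex. -/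
def leafEdges {V : Type*} [Fintype V] [DecidableEq V] (T : SimpleGraph V)
    [DecidableRel T.Adj] : Finset (Sym2 V) :=
  T.edgeFinset.filter (fun e => ∃ v ∈ e, T.degree v = 1)

namespace SimpleGraph

variable {V : Type*} {G : SimpleGraph V} {u v p q w : V}

lemma deleteEdges_adj_of_ne {x y : V} (h : G.Adj x y) (he : s(x, y) ≠ s(u, v)) :
    (G.deleteEdges {s(u, v)}).Adj x y := by
  rw [deleteEdges_adj]
  exact ⟨h, he⟩

variable [Fintype V]

variable (G) in
def branch (u v : V) : Finset V := {w | (G.deleteEdges {s(u, v)}).Reachable u w}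

lemma mem_branch : w ∈ G.branch u v ↔ (G.deleteEdges {s(u, v)}).Reachable u w := by
  simp [branch]

lemma self_mem_branch : u ∈ G.branch u v := mem_branch.2 .rfl

lemma disjoint_branch (hG : G.IsAcyclic) (h : G.Adj u v) :
    Disjoint (G.branch u v) (G.branch v u) := by
  refine Finset.disjoint_left.2 fun w hu hv => ?_
  rw [mem_branch, Sym2.eq_swap] at hv
  exact isBridge_iff.1 (isAcyclic_iff_forall_adj_isBridge.1 hG h)
    ((mem_branch.1 hu).trans hv.symm)

lemma notMem_branch (hG : G.IsAcyclic) (h : G.Adj u v) : v ∉ G.branch u v :=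
  disjoint_right.1 (disjoint_branch hG h) self_mem_branch

variable [DecidableEq V]

lemma branch_union (hG : G.Connected) (h : G.Adj u v) :
    G.branch u v ∪ G.branch v u = univ := by
  refine eq_univ_of_forall fun w => ?_
  simp only [mem_union, mem_branch, Sym2.eq_swap (a := v)]
  induction (reachable_iff_reflTransGen u w).1 (hG.preconnected u w) with
  | refl => exact .inl .rfl
  | tail _ hxy ih =>
    rename_i x y _
    by_cases he : s(x, y) = s(u, v)
    · rcases Sym2.eq_iff.1 he with ⟨rfl, rfl⟩ | ⟨rfl, rfl⟩
      exacts [.inr .rfl, .inl .rfl]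
    · exact ih.imp (·.trans (deleteEdges_adj_of_ne hxy he).reachable)
        (·.trans (deleteEdges_adj_of_ne hxy he).reachable)

/-- In a forest, a walk inside the branch at `p` never visits `u`, so it avoids every edge
at `u`. -/
lemma insert_branch_subset (hG : G.IsAcyclic) (hp : G.Adj u p) (hpv : p ≠ v) :
    insert u (G.branch p u) ⊆ G.branch u v := by
  refine insert_subset self_mem_branch fun w hw => ?_
  obtain ⟨walk⟩ := mem_branch.1 hw
  have hu : u ∉ walk.support := fun hu =>
    notMem_branch hG hp.symm (mem_branch.2 ⟨walk.takeUntil u hu⟩)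
  have hwalk : (G.deleteEdges {s(u, v)}).Reachable p w := by
    refine ⟨walk.transfer _ fun e he => ?_⟩
    have he' := walk.edges_subset_edgeSet he
    rw [edgeSet_deleteEdges] at he' ⊢
    refine ⟨he'.1, fun heuv => hu ?_⟩
    rw [Set.mem_singleton_iff] at heuv
    exact walk.fst_mem_support_of_mem_edges (heuv ▸ he)
  exact mem_branch.2 ((deleteEdges_adj_of_ne hp fun he => hpv
    (Sym2.congr_right.1 he)).reachable.trans hwalk)

lemma card_branch_lt (hG : G.IsAcyclic) (hp : G.Adj u p) (hpv : p ≠ v) :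
    #(G.branch p u) < #(G.branch u v) :=
  (card_lt_card (ssubset_insert (notMem_branch hG hp.symm))).trans_le
    (card_le_card (insert_branch_subset hG hp hpv))

lemma disjoint_branch_of_ne (hG : G.IsAcyclic) (hp : G.Adj u p) (hq : G.Adj u q)
    (hpq : p ≠ q) : Disjoint (G.branch p u) (G.branch q u) :=
  (disjoint_branch hG hq.symm).symm.mono_left
    ((subset_insert _ _).trans (insert_branch_subset hG hp hpq))

lemma card_branch_inter_add (hG : G.IsTree) (h : G.Adj u v) (S : Finset V) :
    #(G.branch u v ∩ S) + #(G.branch v u ∩ S) = #S := by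
  rw [← card_union_of_disjoint
    ((disjoint_branch hG.isAcyclic h).mono inter_subset_left inter_subset_left),
    ← union_inter_distrib_right, branch_union hG.connected h, univ_inter]

lemma odd_card_branch_inter_comm (hG : G.IsTree) (h : G.Adj u v) {S : Finset V}
    (hS : Even #S) : Odd #(G.branch u v ∩ S) ↔ Odd #(G.branch v u ∩ S) := by
  rw [← card_branch_inter_add hG h S, Nat.even_add] at hS
  simpa only [← Nat.not_even_iff_odd, not_iff_not] using hS

variable [DecidableRel G.Adj]

lemma branch_subset_insert_biUnion :
    G.branch u v ⊆ insert u (((G.neighborFinset u).erase v).biUnion fun p => G.branch p u) := by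
  intro w hw
  simp only [mem_insert, mem_biUnion, mem_erase, mem_neighborFinset, mem_branch]
  replace hw := (reachable_iff_reflTransGen u w).1 (mem_branch.1 hw)
  induction hw with
  | refl => exact .inl rfl
  | tail _ hxy ih =>
    rename_i x y _
    rw [deleteEdges_adj, Set.mem_singleton_iff] at hxy
    rcases ih with rfl | ⟨p, ⟨hpv, hp⟩, hpx⟩
    · exact .inr ⟨y, ⟨fun hyv => hxy.2 (hyv ▸ rfl), hxy.1⟩, .rfl⟩
    by_cases hyu : y = u
    · exact .inl hyu
    by_cases he : s(x, y) = s(p, u)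
    · rcases Sym2.eq_iff.1 he with ⟨rfl, rfl⟩ | ⟨rfl, rfl⟩
      exacts [absurd rfl hyu, .inr ⟨y, ⟨hpv, hp⟩, .rfl⟩]
    · exact .inr ⟨p, ⟨hpv, hp⟩, hpx.trans (deleteEdges_adj_of_ne hxy.1 he).reachable⟩

lemma branch_eq_insert_biUnion (hG : G.IsAcyclic) :
    G.branch u v = insert u (((G.neighborFinset u).erase v).biUnion fun p => G.branch p u) := by
  refine branch_subset_insert_biUnion.antisymm (insert_subset self_mem_branch ?_)
  simp only [biUnion_subset, mem_erase, mem_neighborFinset]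
  exact fun p ⟨hpv, hp⟩ => (subset_insert _ _).trans (insert_branch_subset hG hp hpv)

lemma branch_eq_singleton (h : G.Adj u v) (hu : G.degree u = 1) : G.branch u v = {u} := by
  obtain ⟨a, ha⟩ := card_eq_one.1 (G.card_neighborFinset_eq_degree u ▸ hu)
  have hva : v = a := mem_singleton.1 (ha ▸ (mem_neighborFinset _ _ _).2 h)
  refine (singleton_subset_iff.2 self_mem_branch).antisymm' (branch_subset_insert_biUnion.trans ?_)
  rw [ha, hva, erase_singleton, biUnion_empty, insert_empty]

lemma univ_eq_pair_of_degree_eq_one (hG : G.Connected) (h : G.Adj u v) (hu : G.degree u = 1)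
    (hv : G.degree v = 1) : (univ : Finset V) = {u, v} := by
  rw [← branch_union hG h, branch_eq_singleton h hu, branch_eq_singleton h.symm hv, insert_eq]

lemma card_branch_inter_eq_add (hG : G.IsAcyclic) (hnbr : G.neighborFinset u = {v, p, q})
    (hvp : v ≠ p) (hvq : v ≠ q) (hpq : p ≠ q) {S : Finset V} (hu : u ∉ S) :
    #(G.branch u v ∩ S) = #(G.branch p u ∩ S) + #(G.branch q u ∩ S) := by
  have hp : G.Adj u p := (mem_neighborFinset _ _ _).1 (by simp [hnbr])
  have hq : G.Adj u q := (mem_neighborFinset _ _ _).1 (by simp [hnbr])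
  rw [branch_eq_insert_biUnion hG, hnbr, erase_insert (by simp [hvp, hvq]), biUnion_insert,
    singleton_biUnion, insert_inter_of_notMem hu, union_inter_distrib_right,
    card_union_of_disjoint
      ((disjoint_branch_of_ne hG hp hq hpq).mono inter_subset_left inter_subset_left)]

lemma incidenceFinset_eq_image (v : V) :
    G.incidenceFinset v = (G.neighborFinset v).image (s(v, ·)) := by
  ext e
  induction e with
  | _ x y =>
    simp only [mem_incidenceFinset, incidenceSet, Set.mem_ofPred_eq, mem_image, mem_neighborFinset,
      mem_edgeSet, Sym2.mem_iff]
    constructor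
    · rintro ⟨h, rfl | rfl⟩
      exacts [⟨y, h, rfl⟩, ⟨x, h.symm, Sym2.eq_swap⟩]
    · rintro ⟨a, h, he⟩
      rcases Sym2.eq_iff.1 he with ⟨rfl, rfl⟩ | ⟨rfl, rfl⟩
      exacts [⟨h, .inl rfl⟩, ⟨h.symm, .inr rfl⟩]

lemma eq_of_mem_incidenceSet_of_degree_eq_one (hu : G.degree u = 1) {e f : Sym2 V}
    (he : e ∈ G.incidenceSet u) (hf : f ∈ G.incidenceSet u) : e = f :=
  card_le_one.1 (by rw [card_incidenceFinset_eq_degree, hu]) e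
    ((mem_incidenceFinset _ _ _).2 he) f ((mem_incidenceFinset _ _ _).2 hf)

lemma exists_neighborFinset_eq_insert_pair (hu : G.degree u = 3) (h : G.Adj u v) :
    ∃ p q, v ≠ p ∧ v ≠ q ∧ p ≠ q ∧ G.neighborFinset u = {v, p, q} := by
  have hv : v ∈ G.neighborFinset u := (mem_neighborFinset _ _ _).2 h
  obtain ⟨p, q, hpq, hpq'⟩ := card_eq_two.1 <| by
    rw [card_erase_of_mem hv, card_neighborFinset_eq_degree, hu]
  have hvpq : v ∉ ({p, q} : Finset V) := hpq' ▸ notMem_erase v _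
  simp only [mem_insert, mem_singleton, not_or] at hvpq
  exact ⟨p, q, hvpq.1, hvpq.2, hpq, by rw [← hpq', insert_erase hv]⟩

lemma exists_neighborFinset_eq_triple (hu : G.degree u = 3) :
    ∃ a b c, a ≠ b ∧ a ≠ c ∧ b ≠ c ∧ G.neighborFinset u = {a, b, c} :=
  card_eq_three.1 (by rw [card_neighborFinset_eq_degree, hu])

end SimpleGraph

def parityWeight (n : ℕ) : ℝ := if Odd n then 1 / 2 else 0

def TriangleIneq (x y z : ℝ) : Prop :=
  x ≤ y + z ∧ y ≤ x + z ∧ z ≤ x + y ∧ x + y + z ≤ 1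

lemma triangleIneq_parityWeight_iff (x : ℝ) (m n : ℕ) :
    TriangleIneq x (parityWeight m) (parityWeight n) ↔ x = parityWeight (m + n) := by
  unfold TriangleIneq parityWeight
  by_cases hm : Odd m <;> by_cases hn : Odd n <;>
    simp only [Nat.odd_add, ← Nat.not_odd_iff_even, hm, hn, if_true, if_false, iff_true,
      not_true, not_false_eq_true, iff_false] <;>
    constructor <;> (try rintro rfl) <;> (try intro h) <;> norm_num <;> linarith

lemma triangleIneq_iff_forall_le_sum_erase {α : Type*} [DecidableEq α] {a b c : α}
    (hab : a ≠ b) (hac : a ≠ c) (hbc : b ≠ c) (w : α → ℝ) :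
    ((∀ x ∈ ({a, b, c} : Finset α), w x ≤ ∑ y ∈ ({a, b, c} : Finset α).erase x, w y) ∧
      ∑ x ∈ ({a, b, c} : Finset α), w x ≤ 1) ↔ TriangleIneq (w a) (w b) (w c) := by
  have hsum : ∑ x ∈ ({a, b, c} : Finset α), w x = w a + w b + w c := by
    rw [sum_insert (by simp [hab, hac]), sum_pair hbc, add_assoc]
  simp only [mem_insert, mem_singleton, forall_eq_or_imp, forall_eq, TriangleIneq,
    sum_erase_eq_sub (by simp : a ∈ ({a, b, c} : Finset α)),
    sum_erase_eq_sub (by simp : b ∈ ({a, b, c} : Finset α)),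
    sum_erase_eq_sub (by simp : c ∈ ({a, b, c} : Finset α)), hsum]
  constructor
  · rintro ⟨⟨h1, h2, h3⟩, h4⟩
    exact ⟨by linarith, by linarith, by linarith, h4⟩
  · rintro ⟨h1, h2, h3, h4⟩
    exact ⟨⟨by linarith, by linarith, by linarith⟩, h4⟩

lemma card_filter_ne_zero_of_triangleIneq {α : Type*} [DecidableEq α] {a b c : α}
    (hab : a ≠ b) (hac : a ≠ c) (hbc : b ≠ c) {w : α → ℝ}
    (hw : ∀ x, w x = 0 ∨ w x = 1 / 2) (h : TriangleIneq (w a) (w b) (w c)) :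
    #{x ∈ ({a, b, c} : Finset α) | w x ≠ 0} = 0 ∨
      #{x ∈ ({a, b, c} : Finset α) | w x ≠ 0} = 2 := by
  unfold TriangleIneq at h
  rw [filter_insert, filter_insert, filter_singleton]
  rcases hw a with ha | ha <;> rcases hw b with hb | hb <;> rcases hw c with hc | hc <;>
    simp only [ha, hb, hc] at h ⊢ <;> norm_num at h <;> simp [hab, hac, hbc]

section ParityPoint

open SimpleGraph

variable {V : Type*} [Fintype V] [DecidableEq V] {T : SimpleGraph V} [DecidableRel T.Adj]
  {u v a b c : V}

lemma vertexConstraint_iff (hnbr : T.neighborFinset v = {a, b, c}) (hab : a ≠ b) (hac : a ≠ c)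
    (hbc : b ≠ c) (w : Sym2 V → ℝ) :
    ((∀ e ∈ T.incidenceFinset v, w e ≤ ∑ f ∈ (T.incidenceFinset v).erase e, w f) ∧
      ∑ e ∈ T.incidenceFinset v, w e ≤ 1) ↔
    TriangleIneq (w s(v, a)) (w s(v, b)) (w s(v, c)) := by
  rw [incidenceFinset_eq_image, hnbr, image_insert, image_insert, image_singleton]
  exact triangleIneq_iff_forall_le_sum_erase (mt Sym2.congr_right.1 hab)
    (mt Sym2.congr_right.1 hac) (mt Sym2.congr_right.1 hbc) w

variable (T) in
def leafEndpoints (X : Finset (Sym2 V)) : Finset V := {w | T.degree w = 1 ∧ ∃ f ∈ X, w ∈ f}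

lemma mem_leafEndpoints {X : Finset (Sym2 V)} {w : V} :
    w ∈ leafEndpoints T X ↔ T.degree w = 1 ∧ ∃ f ∈ X, w ∈ f := by
  simp [leafEndpoints]

variable (T) in
/-- For even `#S` the two sides of an edge have the same parity, so the orientation chosen in
the existential does not matter (`parityPoint_mk`). -/
def parityPoint (S : Finset V) (e : Sym2 V) : ℝ :=
  if ∃ u v, T.Adj u v ∧ e = s(u, v) ∧ Odd #(T.branch u v ∩ S) then 1 / 2 else 0

variable {S : Finset V}

lemma parityPoint_mk (hT : T.IsTree) (hS : Even #S) (h : T.Adj u v) :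
    parityPoint T S s(u, v) = parityWeight #(T.branch u v ∩ S) := by
  unfold parityPoint parityWeight
  congr 1
  refine propext ⟨fun ⟨x, y, hxy, he, hodd⟩ => ?_, fun hodd => ⟨u, v, h, rfl, hodd⟩⟩
  rcases Sym2.eq_iff.1 he with ⟨rfl, rfl⟩ | ⟨rfl, rfl⟩
  exacts [hodd, (odd_card_branch_inter_comm hT hxy hS).1 hodd]

lemma parityPoint_of_notMem_edgeSet {e : Sym2 V} (he : e ∉ T.edgeSet) :
    parityPoint T S e = 0 :=
  if_neg fun ⟨_, _, h, hxy, _⟩ => he (hxy ▸ h)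

lemma parityPoint_eq_zero_or_eq_half (e : Sym2 V) :
    parityPoint T S e = 0 ∨ parityPoint T S e = 1 / 2 := by
  unfold parityPoint
  split_ifs <;> simp

lemma triangleIneq_iff_eq_parityPoint (hT : T.IsTree) (hS : Even #S) {p q : V}
    (hnbr : T.neighborFinset u = {v, p, q}) (hvp : v ≠ p) (hvq : v ≠ q) (hpq : p ≠ q)
    (hu : u ∉ S) {y : Sym2 V → ℝ} (hyp : y s(u, p) = parityPoint T S s(u, p))
    (hyq : y s(u, q) = parityPoint T S s(u, q)) :
    TriangleIneq (y s(u, v)) (y s(u, p)) (y s(u, q)) ↔ y s(u, v) = parityPoint T S s(u, v) := by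
  have hadj : ∀ x ∈ ({v, p, q} : Finset V), T.Adj u x := fun x hx =>
    (mem_neighborFinset _ _ _).1 (hnbr ▸ hx)
  rw [hyp, hyq, Sym2.eq_swap (a := u) (b := p), Sym2.eq_swap (a := u) (b := q),
    parityPoint_mk hT hS (hadj p (by simp)).symm, parityPoint_mk hT hS (hadj q (by simp)).symm,
    parityPoint_mk hT hS (hadj v (by simp)),
    card_branch_inter_eq_add hT.isAcyclic hnbr hvp hvq hpq hu]
  exact triangleIneq_parityWeight_iff _ _ _

lemma memP_parityPoint (hT : T.IsTree) (hS : Even #S) (hS1 : ∀ v ∈ S, T.degree v = 1) :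
    memP T (parityPoint T S) := by
  refine ⟨fun e he => parityPoint_of_notMem_edgeSet he, fun u hu => ?_, fun e _ _ => ?_⟩
  · obtain ⟨v, p, q, hvp, hvq, hpq, hnbr⟩ := exists_neighborFinset_eq_triple hu
    rw [vertexConstraint_iff hnbr hvp hvq hpq]
    exact (triangleIneq_iff_eq_parityPoint hT hS hnbr hvp hvq hpq
      (fun huS => by simp [hS1 u huS] at hu) rfl rfl).2 rfl
  · rcases parityPoint_eq_zero_or_eq_half (T := T) (S := S) e with h | h <;> rw [h] <;> norm_num

variable {X : Finset (Sym2 V)}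

lemma mem_leafEdges_iff {e : Sym2 V} :
    e ∈ leafEdges T ↔ e ∈ T.edgeSet ∧ ∃ v ∈ e, T.degree v = 1 := by
  simp [leafEdges]

lemma degree_ne_one_of_mk_mem (hT : T.Connected) (hX : X ⊆ leafEdges T) (hXeven : Even #X)
    {x y : V} (hxy : s(x, y) ∈ X) (hx : T.degree x = 1) : T.degree y ≠ 1 := by
  intro hy
  have hadj : T.Adj x y := (mem_leafEdges_iff.1 (hX hxy)).1
  have huniv := univ_eq_pair_of_degree_eq_one hT hadj hx hy
  have hXsub : X ⊆ {s(x, y)} := fun e he => by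
    have heE := (mem_leafEdges_iff.1 (hX he)).1
    have ha : e.out.1 ∈ ({x, y} : Finset V) := huniv ▸ mem_univ _
    rw [mem_insert, mem_singleton] at ha
    rcases ha with ha | ha <;> rw [mem_singleton]
    · exact eq_of_mem_incidenceSet_of_degree_eq_one hx ⟨heE, ha ▸ e.out_fst_mem⟩
        ⟨hadj, Sym2.mem_mk_left x y⟩
    · exact eq_of_mem_incidenceSet_of_degree_eq_one hy ⟨heE, ha ▸ e.out_fst_mem⟩
        ⟨hadj, Sym2.mem_mk_right x y⟩
  have hX1 : #X = 1 :=
    le_antisymm ((card_le_card hXsub).trans_eq (card_singleton _)) (card_pos.2 ⟨_, hxy⟩)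
  exact Nat.not_even_one (hX1 ▸ hXeven)

/-- Evenness of `#X` excludes the single-edge tree with `X` its edge, whose one edge would have
two endpoints counted. -/
lemma card_leafEndpoints (hT : T.Connected) (hX : X ⊆ leafEdges T) (hXeven : Even #X) :
    #(leafEndpoints T X) = #X := by
  have hedge : ∀ w ∈ leafEndpoints T X, ∃ f ∈ X, w ∈ f :=
    fun w hw => (mem_leafEndpoints.1 hw).2
  choose edge hedgeX hmem_edge using hedge
  refine card_bij edge hedgeX (fun w₁ hw₁ w₂ hw₂ he => ?_) (fun f hf => ?_)
  · by_contra hne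
    have hf : s(w₁, w₂) = edge w₁ hw₁ :=
      ((Sym2.mem_and_mem_iff hne).1 ⟨hmem_edge w₁ hw₁, he ▸ hmem_edge w₂ hw₂⟩).symm
    exact degree_ne_one_of_mk_mem hT hX hXeven (hf ▸ hedgeX w₁ hw₁)
      (mem_leafEndpoints.1 hw₁).1 (mem_leafEndpoints.1 hw₂).1
  · obtain ⟨hfE, w, hwf, hw⟩ := mem_leafEdges_iff.1 (hX hf)
    have hwX : w ∈ leafEndpoints T X := mem_leafEndpoints.2 ⟨hw, f, hf, hwf⟩
    exact ⟨w, hwX, eq_of_mem_incidenceSet_of_degree_eq_one hw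
      ⟨(mem_leafEdges_iff.1 (hX (hedgeX w hwX))).1, hmem_edge w hwX⟩ ⟨hfE, hwf⟩⟩

lemma parityPoint_of_mem_leafEdges (hT : T.IsTree) (hX : X ⊆ leafEdges T) (hXeven : Even #X)
    {e : Sym2 V} (he : e ∈ leafEdges T) :
    parityPoint T (leafEndpoints T X) e = if e ∈ X then 1 / 2 else 0 := by
  obtain ⟨heE, u, hue, hu⟩ := mem_leafEdges_iff.1 he
  obtain ⟨v, rfl⟩ := Sym2.mem_iff_exists.1 hue
  have hiff : u ∈ leafEndpoints T X ↔ s(u, v) ∈ X := by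
    simp only [mem_leafEndpoints, hu, true_and]
    refine ⟨fun ⟨f, hf, huf⟩ => ?_, fun h => ⟨_, h, Sym2.mem_mk_left u v⟩⟩
    rwa [eq_of_mem_incidenceSet_of_degree_eq_one hu ⟨(mem_leafEdges_iff.1 (hX hf)).1, huf⟩
      ⟨heE, Sym2.mem_mk_left u v⟩] at hf
  rw [parityPoint_mk hT (card_leafEndpoints hT.connected hX hXeven ▸ hXeven) heE,
    branch_eq_singleton heE hu, parityWeight]
  by_cases h : s(u, v) ∈ X <;> simp [h, hiff.2, mt hiff.1]

lemma eq_parityPoint_of_adj (hT : T.IsTree) (hdeg : ∀ v : V, T.degree v = 1 ∨ T.degree v = 3)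
    (hX : X ⊆ leafEdges T) (hXeven : Even #X) {y : Sym2 V → ℝ} (hy : memP T y)
    (hyX : ∀ e ∈ X, y e = 1 / 2) (hyX' : ∀ e ∈ leafEdges T \ X, y e = 0) (h : T.Adj u v) :
    y s(u, v) = parityPoint T (leafEndpoints T X) s(u, v) := by
  have hS : Even #(leafEndpoints T X) := card_leafEndpoints hT.connected hX hXeven ▸ hXeven
  induction hn : #(T.branch u v) using Nat.strong_induction_on generalizing u v with
  | _ n ih =>
  rcases hdeg u with hu | hu
  · have he : s(u, v) ∈ leafEdges T := mem_leafEdges_iff.2 ⟨h, u, Sym2.mem_mk_left u v, hu⟩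
    rw [parityPoint_of_mem_leafEdges hT hX hXeven he]
    split_ifs with hx
    exacts [hyX _ hx, hyX' _ (mem_sdiff.2 ⟨he, hx⟩)]
  · obtain ⟨p, q, hvp, hvq, hpq, hnbr⟩ := exists_neighborFinset_eq_insert_pair hu h
    have hfar : ∀ x ∈ ({v, p, q} : Finset V), x ≠ v →
        y s(u, x) = parityPoint T (leafEndpoints T X) s(u, x) := fun x hx hxv => by
      have hux : T.Adj u x := (mem_neighborFinset _ _ _).1 (hnbr ▸ hx)
      rw [Sym2.eq_swap]
      exact ih _ (hn ▸ card_branch_lt hT.isAcyclic hux hxv) hux.symm rfl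
    have huS : u ∉ leafEndpoints T X := by simp [mem_leafEndpoints, hu]
    refine (triangleIneq_iff_eq_parityPoint hT hS hnbr hvp hvq hpq huS
      (hfar p (by simp) hvp.symm) (hfar q (by simp) hvq.symm)).1 ?_
    exact (vertexConstraint_iff hnbr hvp hvq hpq y).1 (hy.2.1 u hu)

lemma eq_parityPoint (hT : T.IsTree) (hdeg : ∀ v : V, T.degree v = 1 ∨ T.degree v = 3)
    (hX : X ⊆ leafEdges T) (hXeven : Even #X) {y : Sym2 V → ℝ} (hy : memP T y)
    (hyX : ∀ e ∈ X, y e = 1 / 2) (hyX' : ∀ e ∈ leafEdges T \ X, y e = 0) :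
    y = parityPoint T (leafEndpoints T X) := by
  funext e
  by_cases he : e ∈ T.edgeSet
  · induction e with
    | _ u v => exact eq_parityPoint_of_adj hT hdeg hX hXeven hy hyX hyX' he
  · rw [hy.1 e he, parityPoint_of_notMem_edgeSet he]

end ParityPoint

section LeafPaths

open SimpleGraph

variable {V : Type*} [Fintype V] [DecidableEq V] {T : SimpleGraph V} [DecidableRel T.Adj]

lemma exists_isLeafPathCollection {y : Sym2 V → ℝ} (hy : memP T y)
    (hy01 : ∀ e, y e = 0 ∨ y e = 1 / 2) :
    ∃ H : Finset (Sym2 V), isLeafPathCollection T H ∧ ∀ e, y e ≠ 0 ↔ e ∈ H := by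
  refine ⟨{e ∈ T.edgeFinset | y e ≠ 0}, ⟨filter_subset _ _, fun v hv => ?_⟩,
    fun e => ?_⟩
  · obtain ⟨a, b, c, hab, hac, hbc, hnbr⟩ := exists_neighborFinset_eq_triple hv
    have hinc : {e ∈ {e ∈ T.edgeFinset | y e ≠ 0} | v ∈ e} =
        {e ∈ ({s(v, a), s(v, b), s(v, c)} : Finset (Sym2 V)) | y e ≠ 0} := by
      rw [filter_filter, ← image_singleton, ← image_insert, ← image_insert, ← hnbr,
        ← incidenceFinset_eq_image, incidenceFinset_eq_filter, filter_filter]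
      simp only [and_comm]
    rw [hinc]
    exact card_filter_ne_zero_of_triangleIneq (mt Sym2.congr_right.1 hab)
      (mt Sym2.congr_right.1 hac) (mt Sym2.congr_right.1 hbc) hy01
      ((vertexConstraint_iff hnbr hab hac hbc y).1 (hy.2.1 v hv))
  · rw [mem_filter, mem_edgeFinset, iff_and_self]
    exact not_imp_comm.1 (hy.1 e)

end LeafPaths

/-- Lemma 2.2: for a `{1,3}`-tree `T` and an even set `X` of leaf-edges, there is a unique
point `x ∈ P_T` with `x_e = 1/2` on `X` and `x_e = 0` on the remaining leaf-edges; moreover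
any such point has all coordinates in `{0, 1/2}` and its support is the edge set of a
collection of disjoint leaf-paths. -/
theorem stmt5 {V : Type*} [Fintype V] [DecidableEq V] (T : SimpleGraph V)
    [DecidableRel T.Adj] (hconn : T.Connected) (hacyc : T.IsAcyclic)
    (hdeg : ∀ v : V, T.degree v = 1 ∨ T.degree v = 3)
    (X : Finset (Sym2 V)) (hX : X ⊆ leafEdges T) (hXeven : Even X.card) :
    (∃! x : Sym2 V → ℝ, memP T x ∧ (∀ e ∈ X, x e = 1 / 2) ∧
        (∀ e ∈ leafEdges T \ X, x e = 0)) ∧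
    (∀ x : Sym2 V → ℝ, memP T x → (∀ e ∈ X, x e = 1 / 2) →
        (∀ e ∈ leafEdges T \ X, x e = 0) →
      (∀ e, x e = 0 ∨ x e = 1 / 2) ∧
      ∃ H : Finset (Sym2 V), isLeafPathCollection T H ∧ ∀ e, x e ≠ 0 ↔ e ∈ H) := by
  have hT : T.IsTree := ⟨hconn, hacyc⟩
  have hS : Even #(leafEndpoints T X) := card_leafEndpoints hconn hX hXeven ▸ hXeven
  have hx : memP T (parityPoint T (leafEndpoints T X)) :=
    memP_parityPoint hT hS fun v hv => (mem_leafEndpoints.1 hv).1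
  refine ⟨⟨_, ⟨hx, fun e he => ?_, fun e he => ?_⟩,
    fun y ⟨hy, hyX, hyX'⟩ => eq_parityPoint hT hdeg hX hXeven hy hyX hyX'⟩,
    fun y hy hyX hyX' => ?_⟩
  · rw [parityPoint_of_mem_leafEdges hT hX hXeven (hX he), if_pos he]
  · rw [parityPoint_of_mem_leafEdges hT hX hXeven (mem_sdiff.1 he).1,
      if_neg (mem_sdiff.1 he).2]
  · obtain rfl := eq_parityPoint hT hdeg hX hXeven hy hyX hyX'
    exact ⟨parityPoint_eq_zero_or_eq_half, exists_isLeafPathCollection hy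
      parityPoint_eq_zero_or_eq_half⟩
end
end

section
/- Let T be a {1,3}-tree and let H be a collection of pairwise disjoint leaf-paths in T. Then the point (1/2)·𝟙_H is a vertex of the polytope P_T. -/
open Finset
open scoped Classical

noncomputable section

/-- The point `(1/2)·𝟙_H` associated to a collection `H` of disjoint leaf-paths. -/
def halfIndicator {V : Type*} [Fintype V] [DecidableEq V] (H : Finset (Sym2 V)) :
    Sym2 V → ℝ :=
  fun e => if e ∈ H then 1 / 2 else 0

/-!
A point of a polytope is a vertex as soon as it is the only point of the polytope on which
every valid linear inequality that is tight at it is again tight. For `x = ½·𝟙_H` this pins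
down every coordinate. An edge joining two leaves is fixed by `0 ≤ w_e` or `w_e ≤ 1/2`. At an
internal node that no path of `H` visits, all three triangle inequalities are tight, and
together they force `w = 0` on its three edges. At an internal node on a path of `H`, the
perimeter inequality and the triangle inequalities of the two path edges are tight, which
forces `1/2` on the path edges and then `0` on the third edge.
-/

section TightSet

variable {E : Type*} [AddCommGroup E] [Module ℝ E]

-- For a polyhedron `A` this is the smallest face of `A` containing `x`.
def tightSet (A : Set E) (x : E) : Set E :=
  {y ∈ A | ∀ (ℓ : E →ₗ[ℝ] ℝ) (c : ℝ), (∀ w ∈ A, ℓ w ≤ c) → ℓ x = c → ℓ y = c}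

theorem LinearMap.eq_of_le_of_mem_openSegment (ℓ : E →ₗ[ℝ] ℝ) {c : ℝ} {x y z : E}
    (hx : x ∈ openSegment ℝ y z) (hy : ℓ y ≤ c) (hz : ℓ z ≤ c) (hxc : ℓ x = c) : ℓ y = c := by
  obtain ⟨a, b, ha, hb, hab, rfl⟩ := hx
  rw [map_add, map_smul, map_smul, smul_eq_mul, smul_eq_mul] at hxc
  have hslack : a * (c - ℓ y) + b * (c - ℓ z) = 0 := by linear_combination c * hab - hxc
  have hy0 : a * (c - ℓ y) = 0 := by
    nlinarith [mul_nonneg ha.le (sub_nonneg.2 hy), mul_nonneg hb.le (sub_nonneg.2 hz)]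
  linarith [(mul_eq_zero.1 hy0).resolve_left ha.ne']

theorem mem_extremePoints_of_tightSet_subset {A : Set E} {x : E} (hx : x ∈ A)
    (h : tightSet A x ⊆ {x}) : x ∈ Set.extremePoints ℝ A :=
  mem_extremePoints_iff_left.2 ⟨hx, fun y hy z hz hxyz =>
    h ⟨hy, fun ℓ _ hle hxc => ℓ.eq_of_le_of_mem_openSegment hxyz (hle y hy) (hle z hz) hxc⟩⟩

end TightSet

theorem Finset.eq_zero_of_forall_two_mul_eq_sum {ι : Type*} {I : Finset ι} (hI : #I ≠ 2)
    {w : ι → ℝ} (h : ∀ c ∈ I, 2 * w c = ∑ i ∈ I, w i) : ∀ c ∈ I, w c = 0 := by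
  have hsum : (2 - #I : ℝ) * ∑ i ∈ I, w i = 0 := by
    rw [sub_mul, mul_sum, sum_congr rfl h, sum_const, nsmul_eq_mul, sub_self]
  have hne : (2 - #I : ℝ) ≠ 0 := sub_ne_zero.2 (by exact_mod_cast hI.symm)
  intro c hc
  linarith [h c hc, (mul_eq_zero.1 hsum).resolve_left hne]

section PolytopeP

variable {V : Type*} [Fintype V] [DecidableEq V] {T : SimpleGraph V} [DecidableRel T.Adj]
  {H : Finset (Sym2 V)}

theorem sum_halfIndicator (s : Finset (Sym2 V)) :
    ∑ e ∈ s, halfIndicator H e = #(s ∩ H) / 2 := by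
  unfold halfIndicator
  rw [sum_ite_mem, sum_const, nsmul_eq_mul, mul_one_div]

theorem halfIndicator_of_notMem {e : Sym2 V} (he : e ∉ H) : halfIndicator H e = 0 :=
  if_neg he

theorem halfIndicator_of_mem {e : Sym2 V} (he : e ∈ H) : halfIndicator H e = 1 / 2 :=
  if_pos he

theorem halfIndicator_nonneg (e : Sym2 V) : 0 ≤ halfIndicator H e := by
  unfold halfIndicator; split_ifs <;> norm_num

theorem halfIndicator_le_half (e : Sym2 V) : halfIndicator H e ≤ 1 / 2 := by
  unfold halfIndicator; split_ifs <;> norm_num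

theorem card_incidenceFinset_inter_of_isLeafPathCollection (hH : isLeafPathCollection T H)
    {v : V} (hv : T.degree v = 3) :
    #(T.incidenceFinset v ∩ H) = 0 ∨ #(T.incidenceFinset v ∩ H) = 2 := by
  convert hH.2 v hv using 3 <;>
  · ext e
    simp only [mem_inter, mem_filter, SimpleGraph.mem_incidenceFinset]
    exact ⟨fun ⟨⟨_, hve⟩, heH⟩ => ⟨heH, hve⟩,
      fun ⟨heH, hve⟩ => ⟨⟨SimpleGraph.mem_edgeFinset.1 (hH.1 heH), hve⟩, heH⟩⟩

theorem halfIndicator_eq_zero_of_notMem_edgeSet (hH : H ⊆ T.edgeFinset) {e : Sym2 V}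
    (he : e ∉ T.edgeSet) : halfIndicator H e = 0 :=
  halfIndicator_of_notMem fun heH => he (SimpleGraph.mem_edgeFinset.1 (hH heH))

theorem memP_halfIndicator (hH : isLeafPathCollection T H) : memP T (halfIndicator H) := by
  refine ⟨fun e he => halfIndicator_eq_zero_of_notMem_edgeSet hH.1 he,
    fun v hv => ⟨fun a ha => ?_, ?_⟩,
    fun e _ _ => ⟨halfIndicator_nonneg e, halfIndicator_le_half e⟩⟩
  · rw [sum_erase_eq_sub ha, sum_halfIndicator]
    by_cases haH : a ∈ H
    · have h2 := (card_incidenceFinset_inter_of_isLeafPathCollection hH hv).resolve_left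
        (card_ne_zero_of_mem (mem_inter.2 ⟨ha, haH⟩))
      rw [h2, halfIndicator_of_mem haH]
      norm_num
    · rw [halfIndicator_of_notMem haH, sub_zero]
      positivity
  · rw [sum_halfIndicator]
    rcases card_incidenceFinset_inter_of_isLeafPathCollection hH hv with h | h <;>
      rw [h] <;> norm_num

theorem eq_halfIndicator_of_notMem_edgeSet (hH : H ⊆ T.edgeFinset) {y : Sym2 V → ℝ}
    (hy : memP T y) {e : Sym2 V} (he : e ∉ T.edgeSet) : y e = halfIndicator H e := by
  rw [hy.1 e he, halfIndicator_eq_zero_of_notMem_edgeSet hH he]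

theorem eq_halfIndicator_of_forall_degree_eq_one {y : Sym2 V → ℝ}
    (hy : y ∈ tightSet {w | memP T w} (halfIndicator H)) {e : Sym2 V} (he : e ∈ T.edgeSet)
    (hleaf : ∀ v ∈ e, T.degree v = 1) : y e = halfIndicator H e := by
  by_cases heH : e ∈ H
  · rw [halfIndicator_of_mem heH]
    simpa using hy.2 (LinearMap.proj e) (1 / 2) (fun w hw => (hw.2.2 e he hleaf).2)
      (by simpa using halfIndicator_of_mem heH)
  · rw [halfIndicator_of_notMem heH]
    simpa using hy.2 (-LinearMap.proj e) 0 (fun w hw => by simpa using (hw.2.2 e he hleaf).1)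
      (by simpa using halfIndicator_of_notMem heH)

theorem sum_incidenceFinset_eq_one_of_mem_tightSet {x y : Sym2 V → ℝ}
    (hy : y ∈ tightSet {w | memP T w} x) {v : V} (hv : T.degree v = 3)
    (hx : ∑ e ∈ T.incidenceFinset v, x e = 1) :
    ∑ e ∈ T.incidenceFinset v, y e = 1 := by
  simpa using hy.2 (∑ e ∈ T.incidenceFinset v, LinearMap.proj (R := ℝ) (φ := fun _ => ℝ) e) 1
    (fun w hw => by simpa using (hw.2.1 v hv).2) (by simpa using hx)

theorem two_mul_eq_sum_incidenceFinset_of_mem_tightSet {x y : Sym2 V → ℝ}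
    (hy : y ∈ tightSet {w | memP T w} x) {v : V} (hv : T.degree v = 3) {c : Sym2 V}
    (hc : c ∈ T.incidenceFinset v) (hx : 2 * x c = ∑ e ∈ T.incidenceFinset v, x e) :
    2 * y c = ∑ e ∈ T.incidenceFinset v, y e := by
  let ℓ : (Sym2 V → ℝ) →ₗ[ℝ] ℝ := LinearMap.proj c -
    ∑ e ∈ (T.incidenceFinset v).erase c, LinearMap.proj (R := ℝ) (φ := fun _ => ℝ) e
  have hℓ (w : Sym2 V → ℝ) : ℓ w = 2 * w c - ∑ e ∈ T.incidenceFinset v, w e := by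
    simp only [ℓ, LinearMap.sub_apply, LinearMap.coe_proj, Function.eval, LinearMap.coe_sum,
      Finset.sum_apply, sum_erase_eq_sub hc]
    ring
  have hslack := hy.2 ℓ 0
    (fun w hw => by linarith [hℓ w, sum_erase_eq_sub (f := w) hc, (hw.2.1 v hv).1 c hc])
    (by rw [hℓ, hx, sub_self])
  linarith [hℓ y]

theorem eq_halfIndicator_of_degree_eq_three (hH : isLeafPathCollection T H) {y : Sym2 V → ℝ}
    (hy : y ∈ tightSet {w | memP T w} (halfIndicator H)) {v : V} (hv : T.degree v = 3)
    {e : Sym2 V} (he : e ∈ T.incidenceFinset v) : y e = halfIndicator H e := by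
  have hI : #(T.incidenceFinset v) = 3 := by rw [SimpleGraph.card_incidenceFinset_eq_degree, hv]
  have hcard := card_incidenceFinset_inter_of_isLeafPathCollection hH hv
  set I := T.incidenceFinset v
  rcases hcard with h0 | h2
  · have hx0 : ∀ c ∈ I, halfIndicator H c = 0 := fun c hc =>
      halfIndicator_of_notMem fun hcH =>
        notMem_empty c (card_eq_zero.1 h0 ▸ mem_inter.2 ⟨hc, hcH⟩)
    have hy0 := eq_zero_of_forall_two_mul_eq_sum (by omega : #I ≠ 2) fun c hc =>
      two_mul_eq_sum_incidenceFinset_of_mem_tightSet hy hv hc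
        (by rw [hx0 c hc, sum_eq_zero hx0, mul_zero])
    rw [hy0 e he, hx0 e he]
  · have hx1 : ∑ c ∈ I, halfIndicator H c = 1 := by rw [sum_halfIndicator, h2]; norm_num
    have hy1 := sum_incidenceFinset_eq_one_of_mem_tightSet hy hv hx1
    have hhalf : ∀ c ∈ I ∩ H, y c = 1 / 2 := fun c hc => by
      have := two_mul_eq_sum_incidenceFinset_of_mem_tightSet hy hv (mem_inter.1 hc).1
        (by rw [hx1, halfIndicator_of_mem (mem_inter.1 hc).2]; norm_num)
      linarith
    by_cases heH : e ∈ H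
    · rw [hhalf e (mem_inter.2 ⟨he, heH⟩), halfIndicator_of_mem heH]
    · have hsdiff : I \ H = {e} := by
        refine (eq_of_subset_of_card_le (singleton_subset_iff.2 (mem_sdiff.2 ⟨he, heH⟩)) ?_).symm
        have := card_sdiff_add_card_inter I H
        rw [card_singleton]
        omega
      have hsplit := sum_inter_add_sum_sdiff I H y
      rw [sum_congr rfl hhalf, sum_const, h2, hsdiff, sum_singleton, hy1] at hsplit
      rw [halfIndicator_of_notMem heH]
      norm_num at hsplit
      linarith

end PolytopeP

theorem stmt6_general {V : Type*} [Fintype V] [DecidableEq V] (T : SimpleGraph V)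
    [DecidableRel T.Adj]
    (hdeg : ∀ v : V, T.degree v = 1 ∨ T.degree v = 3)
    (H : Finset (Sym2 V)) (hH : isLeafPathCollection T H) :
    halfIndicator H ∈ Set.extremePoints ℝ {w : Sym2 V → ℝ | memP T w} := by
  refine mem_extremePoints_of_tightSet_subset (memP_halfIndicator hH) fun y hy =>
    funext fun e => ?_
  by_cases heT : e ∈ T.edgeSet
  · by_cases hleaf : ∀ v ∈ e, T.degree v = 1
    · exact eq_halfIndicator_of_forall_degree_eq_one hy heT hleaf
    · obtain ⟨v, hve, hv⟩ := not_forall₂.1 hleaf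
      exact eq_halfIndicator_of_degree_eq_three hH hy ((hdeg v).resolve_left hv)
        ((T.mem_incidenceFinset v e).2 ⟨heT, hve⟩)
  · exact eq_halfIndicator_of_notMem_edgeSet hH.1 hy.1 heT

/-- Lemma 2.3: for a `{1,3}`-tree `T` and a collection `H` of disjoint leaf-paths,
the point `(1/2)·𝟙_H` is a vertex (extreme point) of the polytope `P_T`. -/
theorem stmt6 {V : Type*} [Fintype V] [DecidableEq V] (T : SimpleGraph V)
    [DecidableRel T.Adj] (hconn : T.Connected) (hacyc : T.IsAcyclic)
    (hdeg : ∀ v : V, T.degree v = 1 ∨ T.degree v = 3)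
    (H : Finset (Sym2 V)) (hH : isLeafPathCollection T H) :
    halfIndicator H ∈ Set.extremePoints ℝ {w : Sym2 V → ℝ | memP T w} :=
  stmt6_general T hdeg H hH
end
end

section
/- Let T be a {1,3}-tree with n degree-3 nodes and let H be a disjoint collection of leaf-paths in T. Define h_H : ℝ^{2n+1} → ℝ^{2n+1} by (h_H(w))_e = 1/2 − w_e if e ∈ E(H) and (h_H(w))_e = w_e otherwise. Then h_H is an isometry of ℝ^{2n+1} mapping P_T onto itself, and h_H is an involution. -/
open Finset
open scoped Classical

noncomputable section

lemma tri_iff {α : Type*} [DecidableEq α] (a b c : α) (hab : a ≠ b) (hac : a ≠ c)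
    (hbc : b ≠ c) (g : α → ℝ) :
    ((∀ x ∈ ({a,b,c} : Finset α), g x ≤ ∑ y ∈ ({a,b,c} : Finset α).erase x, g y) ∧
      ∑ x ∈ ({a,b,c} : Finset α), g x ≤ 1) ↔
    (g a ≤ g b + g c ∧ g b ≤ g a + g c ∧ g c ≤ g a + g b ∧ g a + g b + g c ≤ 1) := by
  have ea : ({a,b,c} : Finset α).erase a = {b,c} := by
    rw [Finset.erase_insert]; simp [hab, hac]
  have eb : ({a,b,c} : Finset α).erase b = {a,c} := by
    ext x; simp [Finset.mem_erase]; constructor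
    · rintro ⟨h1, h2 | h2 | h2⟩ <;> tauto
    · rintro (rfl | rfl) <;> simp [hab.symm, hbc, hab, hac, hbc.symm]
  have ec : ({a,b,c} : Finset α).erase c = {a,b} := by
    ext x; simp [Finset.mem_erase]; constructor
    · rintro ⟨h1, h2 | h2 | h2⟩ <;> tauto
    · rintro (rfl | rfl) <;> simp [hac.symm, hbc.symm, hab, hac, hbc]
  have s3 : ∑ x ∈ ({a,b,c} : Finset α), g x = g a + g b + g c := by
    rw [Finset.sum_insert (by simp [hab, hac]), Finset.sum_pair hbc]; ring
  constructor
  · rintro ⟨h1, h2⟩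
    refine ⟨?_, ?_, ?_, ?_⟩
    · have := h1 a (by simp); rwa [ea, Finset.sum_pair hbc] at this
    · have := h1 b (by simp); rwa [eb, Finset.sum_pair hac] at this
    · have := h1 c (by simp); rwa [ec, Finset.sum_pair hab] at this
    · rwa [s3] at h2
  · rintro ⟨h1, h2, h3, h4⟩
    refine ⟨?_, by rwa [s3]⟩
    intro x hx
    simp only [Finset.mem_insert, Finset.mem_singleton] at hx
    rcases hx with rfl | rfl | rfl
    · rwa [ea, Finset.sum_pair hbc]
    · rwa [eb, Finset.sum_pair hac]
    · rwa [ec, Finset.sum_pair hab]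

/-- Theorem 7.5: for a `{1,3}`-tree `T` and a collection `H` of disjoint leaf-paths, the
map `h_H` given by `(h_H w)_e = 1/2 − w_e` for `e ∈ H` and `(h_H w)_e = w_e` otherwise is
an involution, preserves Euclidean distance, and maps the polytope `P_T` onto itself. -/
theorem stmt11 {V : Type*} [Fintype V] [DecidableEq V] (T : SimpleGraph V)
    [DecidableRel T.Adj] (hconn : T.Connected) (hacyc : T.IsAcyclic)
    (hdeg : ∀ v : V, T.degree v = 1 ∨ T.degree v = 3)
    (H : Finset (Sym2 V)) (hH : isLeafPathCollection T H)
    (f : (Sym2 V → ℝ) → (Sym2 V → ℝ))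
    (hf : ∀ w e, f w e = if e ∈ H then 1 / 2 - w e else w e) :
    (∀ w, f (f w) = w) ∧
    (∀ w w', ∑ e : Sym2 V, (f w e - f w' e) ^ 2 = ∑ e : Sym2 V, (w e - w' e) ^ 2) ∧
    f '' {w : Sym2 V → ℝ | memP T w} = {w : Sym2 V → ℝ | memP T w} := by
  obtain ⟨hHsub, hHdeg⟩ := hH
  have hinv : ∀ w, f (f w) = w := by
    intro w; funext e
    by_cases h : e ∈ H <;> simp [hf, h]
  have key : ∀ w, memP T w → memP T (f w) := by
    intro w hw
    obtain ⟨hw0, hw3, hw1⟩ := hw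
    refine ⟨?_, ?_, ?_⟩
    · intro e he
      have heH : e ∉ H := fun h => he (SimpleGraph.mem_edgeFinset.mp (hHsub h))
      rw [hf, if_neg heH]; exact hw0 e he
    · intro v hv
      obtain ⟨a, b, c, hab, hac, hbc, hS⟩ := Finset.card_eq_three.mp
        (by rw [T.card_incidenceFinset_eq_degree, hv] :
          (T.incidenceFinset v).card = 3)
      have hfilter : H.filter (fun e => v ∈ e) = ({a,b,c} : Finset (Sym2 V)).filter (· ∈ H) := by
        ext e
        simp only [Finset.mem_filter, ← hS, SimpleGraph.mem_incidenceFinset,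
          SimpleGraph.mk'_mem_incidenceSet_iff, SimpleGraph.incidenceSet]
        constructor
        · intro ⟨h1, h2⟩
          exact ⟨⟨SimpleGraph.mem_edgeFinset.mp (hHsub h1), h2⟩, h1⟩
        · intro ⟨⟨h1, h2⟩, h3⟩; exact ⟨h3, h2⟩
      have hw3v := hw3 v hv
      rw [hS] at hw3v ⊢
      have hwtri := (tri_iff a b c hab hac hbc w).mp hw3v
      rw [tri_iff a b c hab hac hbc (f w)]
      have hcard := hHdeg v hv
      rw [hfilter] at hcard
      obtain ⟨t1, t2, t3, t4⟩ := hwtri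
      by_cases ha : a ∈ H <;> by_cases hb : b ∈ H <;> by_cases hc : c ∈ H <;>
        simp only [Finset.filter_insert, Finset.filter_singleton, ha, hb, hc,
          if_true, if_false, ite_true, ite_false] at hcard <;>
        simp only [hf, ha, hb, hc, ite_true, ite_false, if_true, if_false,
          if_pos, if_neg, not_false_iff]
      any_goals (simp only [Finset.insert_empty, Finset.card_singleton] at hcard; omega)
      any_goals (rw [Finset.card_insert_of_notMem (by simp [hab, hac]),
        Finset.card_pair hbc] at hcard; omega)
      all_goals (refine ⟨?_, ?_, ?_, ?_⟩ <;> linarith)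
    · intro e he hle
      rw [hf]
      have hle' := hw1 e he hle
      split
      · exact ⟨by linarith [hle'.2], by linarith [hle'.1]⟩
      · exact hle'
  refine ⟨hinv, ?_, ?_⟩
  · intro w w'
    apply Finset.sum_congr rfl
    intro e _
    by_cases h : e ∈ H <;> simp [hf, h] <;> ring
  · apply Set.Subset.antisymm
    · rintro x ⟨w, hw, rfl⟩
      exact key w hw
    · intro w hw
      exact ⟨f w, key w hw, hinv w⟩
end
end

section
/- Let t be a nonnegative integer. The number of integer triples (w_1, w_2, w_3) satisfying w_1 ≤ w_2 + w_3, w_2 ≤ w_1 + w_3, w_3 ≤ w_1 + w_2, with w_1 + w_2 + w_3 even and w_1 + w_2 + w_3 ≤ 2t, equals (1/6)t³ + t² + (11/6)t + 1. -/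
open Finset

/-- Triples of naturals with sum at most `t`. -/
def auxK (t : ℕ) : Finset (ℕ × ℕ × ℕ) :=
  (range (t+1)).biUnion fun a =>
    (range (t+1-a)).biUnion fun b =>
      (range (t+1-a-b)).image fun c => (a, b, c)

lemma mem_auxK {t : ℕ} {x : ℕ × ℕ × ℕ} : x ∈ auxK t ↔ x.1 + x.2.1 + x.2.2 ≤ t := by
  obtain ⟨a, b, c⟩ := x
  simp only [auxK, Finset.mem_biUnion, Finset.mem_image, Finset.mem_range, Prod.mk.injEq]
  constructor
  · rintro ⟨a', ha, b', hb, c', hc, rfl, rfl, rfl⟩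
    omega
  · intro h
    exact ⟨a, by omega, b, by omega, c, by omega, rfl, rfl, rfl⟩

lemma auxL1 (m : ℕ) : 2 * ∑ b ∈ range m, (m - b) = m * (m + 1) := by
  induction m with
  | zero => simp
  | succ n ih =>
    rw [Finset.sum_range_succ]
    have hcong : ∑ b ∈ range n, (n + 1 - b) = ∑ b ∈ range n, ((n - b) + 1) :=
      Finset.sum_congr rfl fun b hb => by have := Finset.mem_range.mp hb; omega
    rw [hcong, Finset.sum_add_distrib, Finset.sum_const, Finset.card_range, smul_eq_mul,
      mul_one]
    have hs : n + 1 - n = 1 := by omega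
    rw [hs]
    nlinarith [ih]

lemma auxL2 (n : ℕ) : 3 * ∑ a ∈ range n, (n - a) * (n - a + 1) = n * (n + 1) * (n + 2) := by
  induction n with
  | zero => simp
  | succ n ih =>
    rw [Finset.sum_range_succ]
    have hcong : ∑ a ∈ range n, (n + 1 - a) * (n + 1 - a + 1)
        = ∑ a ∈ range n, ((n - a) * (n - a + 1) + 2 * (n - a) + 2) := by
      refine Finset.sum_congr rfl fun a ha => ?_
      have := Finset.mem_range.mp ha
      have hna : n + 1 - a = (n - a) + 1 := by omega
      rw [hna]; ring
    rw [hcong, Finset.sum_add_distrib, Finset.sum_add_distrib, Finset.sum_const,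
      Finset.card_range, smul_eq_mul, ← Finset.mul_sum]
    have hs : n + 1 - n = 1 := by omega
    rw [hs]
    have h1 := auxL1 n
    nlinarith [ih, h1]

lemma card_auxK (t : ℕ) : 6 * (auxK t).card = (t + 1) * (t + 2) * (t + 3) := by
  have hcard : (auxK t).card = ∑ a ∈ range (t+1), ∑ b ∈ range (t+1-a), (t+1-a-b) := by
    rw [auxK, Finset.card_biUnion]
    · refine Finset.sum_congr rfl fun a _ => ?_
      rw [Finset.card_biUnion]
      · refine Finset.sum_congr rfl fun b _ => ?_
        rw [Finset.card_image_of_injective _ (fun c₁ c₂ h => by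
          simpa using h), Finset.card_range]
      · intro b₁ _ b₂ _ hne
        simp only [Finset.disjoint_left, Finset.mem_image, Finset.mem_range]
        rintro ⟨p, q, r⟩ ⟨c₁, _, h1⟩ ⟨c₂, _, h2⟩
        apply hne
        simp only [Prod.mk.injEq] at h1 h2
        omega
    · intro a₁ _ a₂ _ hne
      simp only [Finset.disjoint_left, Finset.mem_biUnion, Finset.mem_image, Finset.mem_range]
      rintro ⟨p, q, r⟩ ⟨b₁, _, c₁, _, h1⟩ ⟨b₂, _, c₂, _, h2⟩
      apply hne
      simp only [Prod.mk.injEq] at h1 h2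
      omega
  have h2 : 2 * (auxK t).card = ∑ a ∈ range (t+1), (t+1-a) * (t+1-a+1) := by
    rw [hcard, Finset.mul_sum]
    exact Finset.sum_congr rfl fun a _ => auxL1 (t+1-a)
  have h3 := auxL2 (t+1)
  have h4 : (t+1) * (t+1+1) * (t+1+2) = (t + 1) * (t + 2) * (t + 3) := by ring
  linarith [h2, h3, h4]

/-- `L^Q_T(t)` for the `{1,3}`-tree with one internal node: the number of integer triples
`(w₁,w₂,w₃)` satisfying the three triangle inequalities, with `w₁+w₂+w₃` even and
`w₁+w₂+w₃ ≤ 2t`, equals `(1/6)t³ + t² + (11/6)t + 1`. -/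
theorem stmt14 (t : ℕ) :
    ({w : ℤ × ℤ × ℤ |
        w.1 ≤ w.2.1 + w.2.2 ∧ w.2.1 ≤ w.1 + w.2.2 ∧ w.2.2 ≤ w.1 + w.2.1 ∧
        Even (w.1 + w.2.1 + w.2.2) ∧ w.1 + w.2.1 + w.2.2 ≤ 2 * (t : ℤ)}.ncard : ℚ)
      = (1 / 6) * (t : ℚ) ^ 3 + (t : ℚ) ^ 2 + (11 / 6) * (t : ℚ) + 1 := by
  set F : ℕ × ℕ × ℕ → ℤ × ℤ × ℤ := fun x =>
    ((x.2.1 : ℤ) + x.2.2, (x.1 : ℤ) + x.2.2, (x.1 : ℤ) + x.2.1) with hF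
  have hinj : Function.Injective F := by
    rintro ⟨a, b, c⟩ ⟨a', b', c'⟩ h
    simp only [hF, Prod.mk.injEq] at h ⊢
    omega
  have hSeq : {w : ℤ × ℤ × ℤ |
        w.1 ≤ w.2.1 + w.2.2 ∧ w.2.1 ≤ w.1 + w.2.2 ∧ w.2.2 ≤ w.1 + w.2.1 ∧
        Even (w.1 + w.2.1 + w.2.2) ∧ w.1 + w.2.1 + w.2.2 ≤ 2 * (t : ℤ)}
      = F '' ↑(auxK t) := by
    ext ⟨w1, w2, w3⟩
    simp only [Set.mem_setOf_eq, Set.mem_image, Finset.mem_coe, mem_auxK, hF, Prod.mk.injEq]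
    constructor
    · rintro ⟨h1, h2, h3, ⟨z, hz⟩, hle⟩
      refine ⟨((z - w1).toNat, (z - w2).toNat, (z - w3).toNat), ?_, ?_, ?_, ?_⟩ <;>
        dsimp only <;> omega
    · rintro ⟨⟨a, b, c⟩, hmem, h1, h2, h3⟩
      dsimp only at hmem h1 h2 h3
      refine ⟨by omega, by omega, by omega, ⟨(a : ℤ) + b + c, by omega⟩, by omega⟩
  rw [hSeq, Set.ncard_image_of_injective _ hinj, Set.ncard_coe_finset]
  have h6 := card_auxK t
  have h6q : ((auxK t).card : ℚ) = ((t : ℚ) + 1) * ((t : ℚ) + 2) * ((t : ℚ) + 3) / 6 := by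
    have := congrArg (fun n : ℕ => (n : ℚ)) h6
    push_cast at this
    linarith
  rw [h6q]
  ring
end

section
/- Let t be a nonnegative even integer. The number of integer triples (w_1, w_2, w_3) satisfying the triangle inequalities w_i ≤ w_j + w_k (for all permutations {i,j,k} = {1,2,3}) and w_1 + w_2 + w_3 ≤ t equals (1/24)t³ + (1/4)t² + (5/6)t + 1; for odd nonnegative t it equals (1/24)t³ + (1/4)t² + (11/24)t + 1/4. -/
open Finset

def D2 (n : ℕ) : Finset (ℕ × ℕ) :=
  (range (n+1) ×ˢ range (n+1)).filter (fun p => p.1 + p.2 ≤ n)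

def D3 (n : ℕ) : Finset (ℕ × ℕ × ℕ) :=
  (range (n+1) ×ˢ range (n+1) ×ˢ range (n+1)).filter (fun p => p.1 + p.2.1 + p.2.2 ≤ n)

lemma sum_aux1 (m : ℕ) : 2 * ∑ j ∈ range m, (j+1) = m * (m+1) := by
  induction m with
  | zero => simp
  | succ k ih => rw [Finset.sum_range_succ, Nat.mul_add, ih]; ring

lemma card_D2 (n : ℕ) : 2 * (D2 n).card = (n+1) * (n+2) := by
  have h := Finset.card_eq_sum_card_fiberwise (f := Prod.fst) (s := D2 n) (t := range (n+1))
    (by intro p hp; simp [D2] at hp ⊢; omega)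
  have h2 : ∀ a ∈ range (n+1), ((D2 n).filter (fun p => p.1 = a)).card = n - a + 1 := by
    intro a ha
    have : (D2 n).filter (fun p => p.1 = a) = {a} ×ˢ range (n - a + 1) := by
      ext ⟨x, y⟩
      simp [D2]
      simp at ha
      omega
    rw [this]
    simp
  rw [h, Finset.sum_congr rfl h2, ← Finset.sum_range_reflect]
  have h3 : ∀ j ∈ range (n+1), n - (n + 1 - 1 - j) + 1 = j + 1 := by
    intro j hj; simp at hj; omega
  rw [Finset.sum_congr rfl h3, sum_aux1]

lemma sum_aux2 (m : ℕ) : ∑ j ∈ range m, 3 * ((j+1) * (j+2)) = m * (m+1) * (m+2) := by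
  induction m with
  | zero => simp
  | succ k ih => rw [Finset.sum_range_succ, ih]; ring

lemma card_D3 (n : ℕ) : 6 * (D3 n).card = (n+1) * (n+2) * (n+3) := by
  have h := Finset.card_eq_sum_card_fiberwise (f := Prod.fst) (s := D3 n) (t := range (n+1))
    (by intro p hp; simp [D3] at hp ⊢; omega)
  have h2 : ∀ a ∈ range (n+1), ((D3 n).filter (fun p => p.1 = a)).card = (D2 (n - a)).card := by
    intro a ha
    have : (D3 n).filter (fun p => p.1 = a) = {a} ×ˢ D2 (n - a) := by
      ext ⟨x, y, z⟩
      simp [D2, D3]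
      simp at ha
      omega
    rw [this]
    simp
  have h3 : ∀ a ∈ range (n+1), 6 * (D2 (n-a)).card = 3 * ((n-a+1) * (n-a+2)) := by
    intro a ha
    rw [show 6 = 3 * 2 by rfl, mul_assoc, card_D2]
  rw [h, Finset.mul_sum, Finset.sum_congr rfl (fun a ha => by rw [h2 a ha, h3 a ha]),
    ← Finset.sum_range_reflect]
  have h4 : ∀ j ∈ range (n+1), 3 * ((n - (n + 1 - 1 - j) + 1) * (n - (n + 1 - 1 - j) + 2))
      = 3 * ((j+1) * (j+2)) := by
    intro j hj; simp at hj
    have e : n - (n + 1 - 1 - j) = j := by omega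
    rw [e]
  rw [Finset.sum_congr rfl h4, sum_aux2]

def A (t : ℕ) : Finset (ℕ × ℕ × ℕ) :=
  (range (t+1) ×ˢ range (t+1) ×ˢ range (t+1)).filter
    (fun p => p.1 + p.2.1 + p.2.2 ≤ t ∧ p.1 % 2 = p.2.1 % 2 ∧ p.2.1 % 2 = p.2.2 % 2)

lemma even_part (t : ℕ) :
    (A t).filter (fun p => p.1 % 2 = 0)
      = (D3 (t/2)).image (fun p => (2*p.1, 2*p.2.1, 2*p.2.2)) := by
  ext ⟨x, y, z⟩
  simp [A, D3, Prod.ext_iff]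
  constructor
  · rintro ⟨⟨⟨hx, hy, hz⟩, hs, h1, h2⟩, h0⟩
    exact ⟨x/2, y/2, z/2, by omega⟩
  · rintro ⟨a, b, c, ⟨⟨ha, hb, hc⟩, hs⟩, rfl, rfl, rfl⟩
    omega

lemma odd_part (t : ℕ) (ht : 3 ≤ t) :
    (A t).filter (fun p => ¬ p.1 % 2 = 0)
      = (D3 ((t-3)/2)).image (fun p => (2*p.1+1, 2*p.2.1+1, 2*p.2.2+1)) := by
  ext ⟨x, y, z⟩
  simp [A, D3, Prod.ext_iff]
  constructor
  · rintro ⟨⟨⟨hx, hy, hz⟩, hs, h1, h2⟩, h0⟩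
    exact ⟨x/2, y/2, z/2, by omega⟩
  · rintro ⟨a, b, c, ⟨⟨ha, hb, hc⟩, hs⟩, rfl, rfl, rfl⟩
    omega

lemma odd_part_small (t : ℕ) (ht : t < 3) :
    (A t).filter (fun p => ¬ p.1 % 2 = 0) = ∅ := by
  ext ⟨x, y, z⟩
  simp [A]
  omega

lemma inj_even : Function.Injective (fun p : ℕ×ℕ×ℕ => (2*p.1, 2*p.2.1, 2*p.2.2)) := by
  rintro ⟨a,b,c⟩ ⟨d,e,f⟩ h
  simp [Prod.ext_iff] at h ⊢
  omega

lemma inj_odd : Function.Injective (fun p : ℕ×ℕ×ℕ => (2*p.1+1, 2*p.2.1+1, 2*p.2.2+1)) := by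
  rintro ⟨a,b,c⟩ ⟨d,e,f⟩ h
  simp [Prod.ext_iff] at h ⊢
  omega

lemma card_A (t : ℕ) :
    (A t).card = (D3 (t/2)).card + (if 3 ≤ t then (D3 ((t-3)/2)).card else 0) := by
  rw [← Finset.card_filter_add_card_filter_not (s := A t) (p := fun p => p.1 % 2 = 0),
    even_part, Finset.card_image_of_injective _ inj_even]
  by_cases ht : 3 ≤ t
  · rw [odd_part t ht, Finset.card_image_of_injective _ inj_odd, if_pos ht]
  · rw [odd_part_small t (by omega), if_neg ht, Finset.card_empty]

lemma set_card (t : ℕ) :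
    ({w : ℤ × ℤ × ℤ |
        w.1 ≤ w.2.1 + w.2.2 ∧ w.2.1 ≤ w.1 + w.2.2 ∧ w.2.2 ≤ w.1 + w.2.1 ∧
        w.1 + w.2.1 + w.2.2 ≤ (t : ℤ)}.ncard) = (A t).card := by
  set S := {w : ℤ × ℤ × ℤ |
        w.1 ≤ w.2.1 + w.2.2 ∧ w.2.1 ≤ w.1 + w.2.2 ∧ w.2.2 ≤ w.1 + w.2.1 ∧
        w.1 + w.2.1 + w.2.2 ≤ (t : ℤ)} with hS
  set φ : ℤ × ℤ × ℤ → ℤ × ℤ × ℤ :=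
    fun w => (w.2.1 + w.2.2 - w.1, w.1 + w.2.2 - w.2.1, w.1 + w.2.1 - w.2.2) with hφ
  have hφinj : Function.Injective φ := by
    rintro ⟨a,b,c⟩ ⟨d,e,f⟩ h
    simp [hφ, Prod.ext_iff] at h ⊢
    omega
  set e : ℕ × ℕ × ℕ → ℤ × ℤ × ℤ := fun p => ((p.1 : ℤ), (p.2.1 : ℤ), (p.2.2 : ℤ)) with he
  have heinj : Function.Injective e := by
    rintro ⟨a,b,c⟩ ⟨d,f,g⟩ h
    simp [he, Prod.ext_iff] at h ⊢
    omega
  have himg : φ '' S = e '' (A t : Set (ℕ × ℕ × ℕ)) := by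
    ext ⟨x, y, z⟩
    constructor
    · rintro ⟨⟨a, b, c⟩, hw, hxyz⟩
      simp [hS, hφ, Prod.ext_iff] at hw hxyz
      refine ⟨(x.toNat, y.toNat, z.toNat), ?_, ?_⟩
      · simp [A]
        omega
      · simp [he, Prod.ext_iff]
        omega
    · rintro ⟨⟨a, b, c⟩, hp, hxyz⟩
      simp [A] at hp
      simp [he, Prod.ext_iff] at hxyz
      refine ⟨(((b:ℤ) + c)/2, ((a:ℤ) + c)/2, ((a:ℤ) + b)/2), ?_, ?_⟩
      · simp [hS]
        omega
      · simp [hφ, Prod.ext_iff]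
        omega
  have h1 : S.ncard = (φ '' S).ncard := (Set.ncard_image_of_injective S hφinj).symm
  rw [h1, himg, Set.ncard_image_of_injective _ heinj, Set.ncard_coe_finset]




/-- `L^P_T(t)` for the `{1,3}`-tree with one internal node: the number of integer triples
`(w₁,w₂,w₃)` satisfying the triangle inequalities and `w₁+w₂+w₃ ≤ t` equals
`(1/24)t³ + (1/4)t² + (5/6)t + 1` for even `t` and `(1/24)t³ + (1/4)t² + (11/24)t + 1/4`
for odd `t`. -/
theorem stmt15 (t : ℕ) :
    (Even t →
      ({w : ℤ × ℤ × ℤ |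
          w.1 ≤ w.2.1 + w.2.2 ∧ w.2.1 ≤ w.1 + w.2.2 ∧ w.2.2 ≤ w.1 + w.2.1 ∧
          w.1 + w.2.1 + w.2.2 ≤ (t : ℤ)}.ncard : ℚ)
        = (1 / 24) * (t : ℚ) ^ 3 + (1 / 4) * (t : ℚ) ^ 2 + (5 / 6) * (t : ℚ) + 1) ∧
    (Odd t →
      ({w : ℤ × ℤ × ℤ |
          w.1 ≤ w.2.1 + w.2.2 ∧ w.2.1 ≤ w.1 + w.2.2 ∧ w.2.2 ≤ w.1 + w.2.1 ∧
          w.1 + w.2.1 + w.2.2 ≤ (t : ℤ)}.ncard : ℚ)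
        = (1 / 24) * (t : ℚ) ^ 3 + (1 / 4) * (t : ℚ) ^ 2 + (11 / 24) * (t : ℚ) + 1 / 4) := by
  have h0 : (D3 0).card = 1 := by have := card_D3 0; omega
  have h1 : (D3 1).card = 4 := by have := card_D3 1; omega
  constructor
  · rintro ⟨u, rfl⟩
    rw [set_card, card_A]
    match u with
    | 0 => norm_num [h0]
    | 1 => norm_num [h1]
    | (v + 2) =>
      rw [if_pos (by omega : 3 ≤ v + 2 + (v + 2)),
        show (v + 2 + (v + 2)) / 2 = v + 2 by omega,
        show (v + 2 + (v + 2) - 3) / 2 = v by omega]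
      have hxQ := congrArg (Nat.cast (R := ℚ)) (card_D3 (v+2))
      have hyQ := congrArg (Nat.cast (R := ℚ)) (card_D3 v)
      push_cast at hxQ hyQ ⊢
      linear_combination hxQ / 6 + hyQ / 6
  · rintro ⟨v, rfl⟩
    rw [set_card, card_A]
    match v with
    | 0 => norm_num [h0]
    | (w + 1) =>
      rw [if_pos (by omega : 3 ≤ 2 * (w + 1) + 1),
        show (2 * (w + 1) + 1) / 2 = w + 1 by omega,
        show (2 * (w + 1) + 1 - 3) / 2 = w by omega]
      have hxQ := congrArg (Nat.cast (R := ℚ)) (card_D3 (w+1))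
      have hyQ := congrArg (Nat.cast (R := ℚ)) (card_D3 w)
      push_cast at hxQ hyQ ⊢
      linear_combination hxQ / 6 + hyQ / 6
end

section
/- Let h ≥ 1 be an integer and define d(α) for integers α ≥ 1 by the recurrence ∑_{j=0}^{h−1} C(h−j, j) · d(h−j) = (−1)^h · 2^{h+1} / h for all h ≥ 1 (where C(h−j, j) = 0 when j > h−j). Then d(h) = (−1)^h · ∑_{j=0}^{h−1} (2^{h−j+1}/(h+j)) · C(h+j, j). -/
/-!
The recurrence is triangular (the coefficient of `d h` is `C(h, 0) = 1`), so it has exactly one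
solution, and `d h = (-4)^h / h` is it. Writing `P n = ∑_{a+b=n} C(a,b) y^a`, absorption
`(h/a) C(a,b) = C(a,b) + C(a-1,b-1)` turns the left side of the recurrence, times `h`, into
`P h + y P (h-2)`. Pascal's rule gives `P (n+2) = y (P (n+1) + P n)`, whose characteristic
polynomial `t² + 4t + 4` has the double root `-2` at `y = -4`; so `P n = (n+1)(-2)^n` and the
left side is `2(-2)^h / h`, as required. The stated closed form equals `(-4)^h / h` too, since
`C(h+j, j)/(h+j) = C(h-1+j, j)/h` and `∑_{j≤n} C(n+j, j)/2^j = 2^n`.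
-/

open Finset

def diagonalChooseSum {R : Type*} [CommSemiring R] (y : R) (n : ℕ) : R :=
  ∑ p ∈ antidiagonal n, (p.1.choose p.2 : R) * y ^ p.1

section CommSemiring

variable {R : Type*} [CommSemiring R] (y : R)

theorem diagonalChooseSum_add_one_eq (n : ℕ) :
    diagonalChooseSum y (n + 1) =
      y ^ (n + 1) + ∑ p ∈ antidiagonal n, (p.1.choose (p.2 + 1) : R) * y ^ p.1 := by
  simp [diagonalChooseSum, Nat.sum_antidiagonal_succ']

theorem diagonalChooseSum_add_two_eq (n : ℕ) :
    diagonalChooseSum y (n + 2) =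
      y ^ (n + 2) + ∑ p ∈ antidiagonal n, ((p.1 + 1).choose (p.2 + 1) : R) * y ^ (p.1 + 1) := by
  simp [diagonalChooseSum, Nat.antidiagonal_succ_succ']

theorem diagonalChooseSum_add_two (n : ℕ) :
    diagonalChooseSum y (n + 2) = y * (diagonalChooseSum y (n + 1) + diagonalChooseSum y n) := by
  rw [diagonalChooseSum_add_two_eq, diagonalChooseSum_add_one_eq, diagonalChooseSum]
  simp only [Nat.choose_succ_succ', Nat.cast_add, add_mul, sum_add_distrib, mul_add, mul_sum]
  ring_nf

end CommSemiring

theorem diagonalChooseSum_neg_four {R : Type*} [CommRing R] (n : ℕ) :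
    diagonalChooseSum (-4 : R) n = (n + 1) * (-2) ^ n := by
  induction n using Nat.twoStepInduction with
  | zero => simp [diagonalChooseSum]
  | one => norm_num [diagonalChooseSum, Nat.sum_antidiagonal_succ]
  | more n ih₀ ih₁ =>
    rw [diagonalChooseSum_add_two, ih₀, ih₁]
    push_cast
    ring

theorem sum_range_choose_sub_mul_eq_sum_antidiagonal {R : Type*} [Semiring R] (f : ℕ → R)
    {h : ℕ} (hh : 1 ≤ h) :
    ∑ j ∈ range h, ((h - j).choose j : R) * f (h - j) =
      ∑ p ∈ antidiagonal h, (p.1.choose p.2 : R) * f p.1 := by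
  rw [← Nat.sum_antidiagonal_swap, Nat.sum_antidiagonal_eq_sum_range_succ_mk, sum_range_succ]
  simp [Nat.choose_eq_zero_of_lt hh]

theorem eq_of_sum_range_choose_mul_eq {R : Type*} [Ring R] {d e : ℕ → R}
    (hde : ∀ h, 1 ≤ h → ∑ j ∈ range h, ((h - j).choose j : R) * d (h - j) =
      ∑ j ∈ range h, ((h - j).choose j : R) * e (h - j)) :
    ∀ h, 1 ≤ h → d h = e h := by
  intro h
  induction h using Nat.strong_induction_on with
  | _ h ih =>
    intro hh
    obtain ⟨m, rfl⟩ : ∃ m, h = m + 1 := ⟨h - 1, by omega⟩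
    have lower : ∑ j ∈ range m, ((m - j).choose (j + 1) : R) * d (m - j) =
        ∑ j ∈ range m, ((m - j).choose (j + 1) : R) * e (m - j) := by
      refine sum_congr rfl fun j hj => ?_
      rw [ih (m - j) (by omega) (by simp at hj; omega)]
    simpa [sum_range_succ', lower] using hde (m + 1) hh

section Field

variable {K : Type*} [Field K] [CharZero K]

theorem add_two_mul_sum_antidiagonal_choose_mul_pow_div (y : K) (n : ℕ) :
    (n + 2) * ∑ p ∈ antidiagonal (n + 2), (p.1.choose p.2 : K) * (y ^ p.1 / p.1) =
      diagonalChooseSum y (n + 2) + y * diagonalChooseSum y n := by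
  have absorb : ∀ p ∈ antidiagonal n,
      (n + 2 : K) * (((p.1 + 1).choose (p.2 + 1) : ℕ) * (y ^ (p.1 + 1) / (p.1 + 1 : ℕ))) =
        ((p.1 + 1).choose (p.2 + 1) : K) * y ^ (p.1 + 1) + y * ((p.1.choose p.2 : K) * y ^ p.1) := by
    rintro ⟨a, b⟩ hab
    obtain rfl : a + b = n := by simpa using hab
    have key : ((a + 1 : ℕ) : K) * a.choose b = (a + 1).choose (b + 1) * (b + 1) := by
      exact_mod_cast Nat.add_one_mul_choose_eq a b
    push_cast at key ⊢
    field_simp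
    linear_combination -y ^ (a + 1) * key
  rw [diagonalChooseSum_add_two_eq, diagonalChooseSum, mul_sum, Nat.sum_antidiagonal_succ,
    Nat.sum_antidiagonal_succ', sum_congr rfl absorb, sum_add_distrib, ← mul_sum]
  have hn : (n + 2 : K) ≠ 0 := by exact_mod_cast (n + 1).succ_ne_zero
  simp only [Nat.choose_zero_succ, Nat.choose_zero_right, Nat.cast_zero, Nat.cast_one, zero_mul,
    one_mul, mul_zero, zero_add]
  push_cast
  rw [add_assoc (n : K) 1 1, one_add_one_eq_two, mul_div_cancel₀ _ hn]
  ring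

theorem sum_range_choose_mul_neg_four_pow_div {h : ℕ} (hh : 1 ≤ h) :
    ∑ j ∈ range h, ((h - j).choose j : K) * ((-4) ^ (h - j) / (h - j : ℕ)) =
      (-1) ^ h * 2 ^ (h + 1) / h := by
  rw [sum_range_choose_sub_mul_eq_sum_antidiagonal (fun k => (-4 : K) ^ k / k) hh]
  obtain rfl | ⟨n, rfl⟩ : h = 1 ∨ ∃ n, h = n + 2 := by
    rcases h with _ | _ | n <;> simp_all
  · norm_num [Nat.sum_antidiagonal_succ]
  · rw [eq_div_iff (Nat.cast_ne_zero.2 (by omega)), mul_comm]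
    push_cast
    rw [add_two_mul_sum_antidiagonal_choose_mul_pow_div, diagonalChooseSum_neg_four,
      diagonalChooseSum_neg_four]
    simp only [neg_pow (2 : K)]
    push_cast
    ring

theorem sum_range_choose_add_div_two_pow_add_one_eq (n k : ℕ) :
    ∑ j ∈ range (k + 1), ((n + 1 + j).choose j : K) / 2 ^ j =
      ∑ j ∈ range (k + 1), ((n + j).choose j : K) / 2 ^ j +
        (∑ j ∈ range k, ((n + 1 + j).choose j : K) / 2 ^ j) / 2 := by
  have pascal : ∀ j ∈ range k, ((n + 1 + (j + 1)).choose (j + 1) : K) / 2 ^ (j + 1) =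
      ((n + (j + 1)).choose (j + 1) : K) / 2 ^ (j + 1) + ((n + 1 + j).choose j : K) / 2 ^ j / 2 := by
    intro j _
    rw [show n + 1 + (j + 1) = n + (j + 1) + 1 by omega, Nat.choose_succ_succ', Nat.cast_add,
      show n + (j + 1) = n + 1 + j by omega, pow_succ]
    ring
  rw [sum_range_succ', sum_congr rfl pascal, sum_add_distrib, sum_div,
    sum_range_succ' (fun j => ((n + j).choose j : K) / 2 ^ j)]
  simp only [add_zero, Nat.choose_zero_right, Nat.cast_one, pow_zero]
  ring

theorem sum_range_choose_add_div_two_pow (n : ℕ) :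
    ∑ j ∈ range (n + 1), ((n + j).choose j : K) / 2 ^ j = 2 ^ n := by
  induction n with
  | zero => simp
  | succ n ih =>
    have step := sum_range_choose_add_div_two_pow_add_one_eq (K := K) n (n + 1)
    rw [sum_range_succ (fun j => ((n + j).choose j : K) / 2 ^ j), ih] at step
    have top := sum_range_succ (fun j => ((n + 1 + j).choose j : K) / 2 ^ j) (n + 1)
    have central : ((n + 1 + (n + 1)).choose (n + 1) : K) = 2 * (n + (n + 1)).choose (n + 1) := by
      rw [show n + 1 + (n + 1) = 2 * n + 1 + 1 by omega, Nat.choose_succ_succ',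
        ← Nat.choose_symm_half, show n + (n + 1) = 2 * n + 1 by omega]
      push_cast
      ring
    linear_combination 2 * step - top - central / 2 ^ (n + 1)

theorem sum_range_two_pow_div_mul_choose {h : ℕ} (hh : 1 ≤ h) :
    ∑ j ∈ range h, (2 : K) ^ (h - j + 1) / ((h : K) + j) * (h + j).choose j = 4 ^ h / h := by
  obtain ⟨n, rfl⟩ : ∃ n, h = n + 1 := ⟨h - 1, by omega⟩
  have term : ∀ j ∈ range (n + 1),
      (2 : K) ^ (n + 1 - j + 1) / ((n + 1 : ℕ) + j) * (n + 1 + j).choose j =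
        2 ^ (n + 2) / (n + 1) * ((n + j).choose j / 2 ^ j) := by
    intro j hj
    have absorb : ((n + j).choose j : K) * (n + j + 1) = (n + j + 1).choose j * (n + 1) := by
      have := Nat.choose_mul_succ_eq (n + j) j
      rw [show n + j + 1 - j = n + 1 by omega] at this
      exact_mod_cast this
    have pow : (2 : K) ^ (n + 1 - j + 1) * 2 ^ j = 2 ^ (n + 2) := by
      rw [← pow_add, show n + 1 - j + 1 + j = n + 2 by simp at hj; omega]
    have hpos : (n + 1 + j : K) ≠ 0 := by norm_cast; omega
    rw [show n + 1 + j = n + j + 1 by omega]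
    push_cast
    field_simp
    linear_combination (-2 ^ (n + 1 - j + 1) * 2 ^ j : K) * absorb +
      ((n + j).choose j * (n + 1 + j) : K) * pow
  rw [sum_congr rfl term, ← mul_sum, sum_range_choose_add_div_two_pow,
    show (4 : K) = 2 ^ 2 by norm_num, ← pow_mul]
  push_cast
  ring

end Field

/-- Chebyshev-type inverse relation: if `d : ℕ → ℚ` satisfies
`∑_{j=0}^{h−1} C(h−j, j) d(h−j) = (−1)^h 2^{h+1}/h` for all `h ≥ 1`, then
`d(h) = (−1)^h ∑_{j=0}^{h−1} (2^{h−j+1}/(h+j)) C(h+j, j)` for all `h ≥ 1`. -/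
theorem stmt16 (d : ℕ → ℚ)
    (hd : ∀ h : ℕ, 1 ≤ h →
      ∑ j ∈ Finset.range h, (Nat.choose (h - j) j : ℚ) * d (h - j)
        = (-1) ^ h * 2 ^ (h + 1) / (h : ℚ)) :
    ∀ h : ℕ, 1 ≤ h →
      d h = (-1) ^ h *
        ∑ j ∈ Finset.range h, (2 : ℚ) ^ (h - j + 1) / ((h : ℚ) + (j : ℚ)) *
          (Nat.choose (h + j) j : ℚ) := by
  have solution : ∀ h, 1 ≤ h → d h = (-4 : ℚ) ^ h / h :=
    eq_of_sum_range_choose_mul_eq (e := fun k => (-4 : ℚ) ^ k / k) fun h hh =>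
      (hd h hh).trans (sum_range_choose_mul_neg_four_pow_div hh).symm
  intro h hh
  rw [solution h hh, sum_range_two_pow_div_mul_choose hh, neg_pow (4 : ℚ)]
  ring
end
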